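/- For every k ≥ 1 and every valid refinement sequence Π = (π₀^k, …, π_n) for the bisplitter B_k: if the prefix block B_σ belongs to π_i for some 0 ≤ i < n, then either B_σ belongs to π_{i+1}, or both B_{σ0} and B_{σ1} belong to π_{i+1}. -/

import Mathlib

/-! ## Labeled transition systems with initial partition, partitions, refinement -/

structure LTS (S A : Type) where
  tr : S → A → S → Prop
  init : Finset (Finset S)

def inSameBlock {S : Type} (π : Finset (Finset S)) (s t : S) : Prop :=
  ∃ B ∈ π, s ∈ B ∧ t ∈ B

def IsBlockPartition {S : Type} (π : Finset (Finset S)) : Prop :=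
  ∅ ∉ π ∧ (∀ B ∈ π, ∀ B' ∈ π, B ≠ B' → Disjoint B B') ∧ ∀ s : S, ∃ B ∈ π, s ∈ B

def RefinesPart {S : Type} (π' π : Finset (Finset S)) : Prop :=
  ∀ B' ∈ π', ∃ B ∈ π, B' ⊆ B

def ReachesSet {S A : Type} (L : LTS S A) (s : S) (a : A) (U : Finset S) : Prop :=
  ∃ t ∈ U, L.tr s a t

def StableUnderBlock {S A : Type} (L : LTS S A) (V U : Finset S) : Prop :=
  ∀ a : A, (∀ s ∈ V, ReachesSet L s a U) ∨ (∀ s ∈ V, ¬ ReachesSet L s a U)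

def IsStablePartition {S A : Type} (L : LTS S A) (π : Finset (Finset S)) : Prop :=
  ∀ B ∈ π, ∀ C ∈ π, StableUnderBlock L B C

def SplitWitness {S A : Type} (L : LTS S A) (π : Finset (Finset S)) (s t : S) : Prop :=
  ∃ a s', L.tr s a s' ∧ ∀ t', L.tr t a t' → ¬ inSameBlock π s' t'

def ValidRefinement {S A : Type} (L : LTS S A) (π π' : Finset (Finset S)) : Prop :=
  RefinesPart π' π ∧ π' ≠ π ∧
  ∀ s t : S, ¬ inSameBlock π' s t →
    (¬ inSameBlock π s t ∨ SplitWitness L π s t ∨ SplitWitness L π t s)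

def ValidRefinementSeq {S A : Type} (L : LTS S A) (n : ℕ)
    (seq : ℕ → Finset (Finset S)) : Prop :=
  seq 0 = L.init ∧ (∀ i ≤ n, IsBlockPartition (seq i)) ∧
  (∀ i < n, ValidRefinement L (seq i) (seq (i + 1))) ∧
  IsStablePartition L (seq n)

/-! ## Refinement costs -/

def IRCstep {S : Type} [DecidableEq S] (π π' : Finset (Finset S)) : ℕ :=
  ∑ B ∈ π, (B.card - (π'.filter fun B' => B' ⊆ B).sup Finset.card)

def IRCseq {S : Type} [DecidableEq S] (n : ℕ) (seq : ℕ → Finset (Finset S)) : ℕ :=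
  ∑ i ∈ Finset.range n, IRCstep (seq i) (seq (i + 1))

noncomputable def IRC {S A : Type} [DecidableEq S] (L : LTS S A) : ℕ :=
  sInf {c | ∃ n seq, ValidRefinementSeq L n seq ∧ IRCseq n seq = c}

noncomputable def PIRC {S A : Type} (L : LTS S A) : ℕ :=
  sInf {n | ∃ seq, ValidRefinementSeq L n seq}

/-! ## Bisimulation, end structures, paths -/

def IsBisimulation {S A : Type} (L : LTS S A) (R : S → S → Prop) : Prop :=
  Symmetric R ∧ (∀ s t, R s t → inSameBlock L.init s t) ∧
  ∀ s t a s', R s t → L.tr s a s' → ∃ t', L.tr t a t' ∧ R s' t'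

def Bisimilar {S A : Type} (L : LTS S A) (s t : S) : Prop :=
  ∃ R, IsBisimulation L R ∧ R s t

def TransClosed {S A : Type} (L : LTS S A) (U : Set S) : Prop :=
  ∀ s ∈ U, ∀ a t, L.tr s a t → t ∈ U

def EndStructure {S A : Type} (L : LTS S A) (U : Set S) : Prop :=
  U.Nonempty ∧ TransClosed L U ∧
  ∀ V : Set S, TransClosed L V → (U ∩ V).Nonempty → U ⊆ V

def PathTo {S A : Type} (L : LTS S A) : List A → S → S → Prop
  | [], s, t => s = t
  | a :: w, s, t => ∃ u, L.tr s a u ∧ PathTo L w u t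

/-! ## The bisplitter B_k -/

def bsStep {k : ℕ} (σ : Fin k → Bool) (j : Fin (k - 1)) : Fin k → Bool :=
  if σ ⟨j.val + 1, by have := j.isLt; omega⟩ = false then σ
  else fun p => if p.val < j.val then σ p else if p.val = j.val then !(σ p) else false

def prefixBlock (k : ℕ) (p : List Bool) : Finset (Fin k → Bool) :=
  Finset.univ.filter fun σ => p <+: List.ofFn σ

def bisplitter (k : ℕ) : LTS (Fin k → Bool) (Fin (k - 1)) where
  tr := fun s a t => t = bsStep s a
  init := {prefixBlock k [false], prefixBlock k [true]}

def zeroState (k : ℕ) : Fin k → Bool := fun _ => false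

def oneState (k : ℕ) : Fin k → Bool := fun i => decide (i.val = 0)

/-- The bisplitter with the initial partition updated by the end structure oracle. -/
def bisplitter' (k : ℕ) : LTS (Fin k → Bool) (Fin (k - 1)) where
  tr := (bisplitter k).tr
  init := { {zeroState k}, prefixBlock k [false] \ {zeroState k},
            {oneState k}, prefixBlock k [true] \ {oneState k} }

/-! ## The layered bisplitter C_k -/

def treeHeight (k : ℕ) : ℕ := Nat.clog 2 (k / 2)

abbrev TreeWord (h : ℕ) := Σ i : Fin (h + 1), Fin i.val → Bool

abbrev CState (k : ℕ) :=
  ((Fin k → Bool) × Fin (2 ^ k)) ⊕ ((Fin k → Bool) × TreeWord (treeHeight k))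

instance instCStateDecEq (k : ℕ) : DecidableEq (CState k) := inferInstance

instance instCStateFintype (k : ℕ) : Fintype (CState k) := inferInstance

def rootWord (k : ℕ) : TreeWord (treeHeight k) := ⟨⟨0, Nat.succ_pos _⟩, Fin.elim0⟩

def binVal (w : List Bool) : ℕ := w.foldl (fun acc b => 2 * acc + b.toNat) 0

/-- The a_j-successor in B_k for j = lbl(v) = min(bin(v)+1, k-1) (1-based),
    i.e. 0-based index min(bin(v), k-2). -/
def bkSucc (k : ℕ) (σ : Fin k → Bool) (v : List Bool) : Fin k → Bool :=
  if h : min (binVal v) (k - 2) < k - 1 then bsStep σ ⟨min (binVal v) (k - 2), h⟩ else σ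

def cTr (k : ℕ) (s : CState k) (α : Bool) (t : CState k) : Prop :=
  match s with
  | Sum.inl (σ, ℓ) =>
      if h : ℓ.val + 1 < 2 ^ k then t = Sum.inl (σ, ⟨ℓ.val + 1, h⟩)
      else t = Sum.inr (σ, rootWord k)
  | Sum.inr (σ, w) =>
      if h : w.1.val < treeHeight k then
        t = Sum.inr (σ, ⟨⟨w.1.val + 1, by omega⟩, Fin.snoc w.2 α⟩)
      else t = Sum.inl (bkSucc k σ (List.ofFn w.2 ++ [α]), ⟨0, by positivity⟩)

def firstBit {k : ℕ} (σ : Fin k → Bool) : Bool :=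
  if h : 0 < k then σ ⟨0, h⟩ else false

def stakeBlock (k : ℕ) (ℓ : Fin (2 ^ k)) (b : Bool) : Finset (CState k) :=
  Finset.univ.filter fun s => ∃ σ : Fin k → Bool, firstBit σ = b ∧ s = Sum.inl (σ, ℓ)

def treeBlock (k : ℕ) : Finset (CState k) :=
  Finset.univ.filter fun s => s.isRight = true

def cInit (k : ℕ) : Finset (Finset (CState k)) :=
  (Finset.univ.image fun p : Fin (2 ^ k) × Bool => stakeBlock k p.1 p.2) ∪ {treeBlock k}

def layered (k : ℕ) : LTS (CState k) Bool := ⟨cTr k, cInit k⟩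

/-- The stake index of level 1. -/
def firstLevel (k : ℕ) : Fin (2 ^ k) := ⟨0, by positivity⟩

/-- The stake index of level 2^k. -/
def lastLevel (k : ℕ) : Fin (2 ^ k) :=
  ⟨2 ^ k - 1, Nat.sub_lt (by positivity) one_pos⟩

def mkWord {h : ℕ} (w : List Bool) (hw : w.length ≤ h) : TreeWord h :=
  ⟨⟨w.length, Nat.lt_succ_of_le hw⟩, fun j => w.get j⟩

def endSet (k : ℕ) (σ₀ : Fin k → Bool) : Set (CState k) :=
  {s | (∃ ℓ, s = Sum.inl (σ₀, ℓ)) ∨ ∃ w, s = Sum.inr (σ₀, w)}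

/-! ## End structure partition -/

noncomputable def bisimClass {S A : Type} [Fintype S] (L : LTS S A) (s : S) : Finset S :=
  (Set.toFinite {t | Bisimilar L s t}).toFinset

def ESUnion {S A : Type} (L : LTS S A) : Set S := ⋃₀ {U | EndStructure L U}

noncomputable def esPartition {S A : Type} [Fintype S] [DecidableEq S] (L : LTS S A) :
    Finset (Finset S) :=
  ((Set.toFinite {B : Finset S | ∃ s ∈ ESUnion L, B = bisimClass L s}).toFinset ∪
      L.init.image fun B =>
        B \ (Set.toFinite {t | ∃ s ∈ ESUnion L, Bisimilar L s t}).toFinset) \ {∅}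

/-! ## The sequential splitter D_n (states 0,…,n-1 standing for 1,…,n) -/

def seqSplitter (n : ℕ) : LTS (Fin n) Unit where
  tr := fun s _ t => if h : s.val + 1 < n then t = ⟨s.val + 1, h⟩ else t = s
  init := {Finset.univ.filter fun s => s.val + 1 < n,
           Finset.univ.filter fun s => s.val + 1 = n}

def dPart (n i : ℕ) : Finset (Finset (Fin n)) :=
  {Finset.univ.filter fun s => s.val + i < n} ∪
    (Finset.univ.filter fun s : Fin n => n ≤ s.val + i).image fun s => {s}

/-! ## The fast parallel example G_k -/

def gLTS (k : ℕ) : LTS (Fin (2 ^ k) ⊕ Fin k) Unit where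
  tr := fun s _ t => ∃ (i : Fin (2 ^ k)) (j : Fin k),
    s = Sum.inl i ∧ t = Sum.inr j ∧ Nat.testBit i.val j.val = true
  init := {Finset.univ.filter fun s => s.isLeft = true} ∪
    Finset.univ.image fun j : Fin k => ({Sum.inr j} : Finset (Fin (2 ^ k) ⊕ Fin k))

/-! ## Auxiliary lemmas for Statement 2 -/

section Stmt2Aux

variable {k : ℕ}

lemma mem_prefixBlock_iff {p : List Bool} {σ : Fin k → Bool} :
    σ ∈ prefixBlock k p ↔ p.length ≤ k ∧
      ∀ (i : ℕ) (hi : i < p.length) (hik : i < k), σ ⟨i, hik⟩ = p.get ⟨i, hi⟩ := by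
  simp only [prefixBlock, Finset.mem_filter, Finset.mem_univ, true_and]
  constructor
  · intro h
    have hlen : p.length ≤ k := by simpa using h.length_le
    refine ⟨hlen, fun i hi hik => ?_⟩
    have h1 := h.getElem hi
    have h2 := List.getElem_ofFn (f := σ) (i := i) (by simpa)
    rw [h2] at h1
    simp [← h1]
  · rintro ⟨hlen, hget⟩
    rw [List.prefix_iff_eq_take]
    apply List.ext_getElem
    · simp [hlen]
    · intro i h1 h2
      have hik : i < k := lt_of_lt_of_le h1 hlen
      rw [List.getElem_take, List.getElem_ofFn]
      exact (hget i h1 hik).symm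

lemma prefixBlock_length_le {p : List Bool} {σ : Fin k → Bool}
    (h : σ ∈ prefixBlock k p) : p.length ≤ k :=
  (mem_prefixBlock_iff.1 h).1

lemma mem_prefixBlock_append {p : List Bool} {b : Bool} {σ : Fin k → Bool} :
    σ ∈ prefixBlock k (p ++ [b]) ↔
      σ ∈ prefixBlock k p ∧ ∃ h : p.length < k, σ ⟨p.length, h⟩ = b := by
  simp only [mem_prefixBlock_iff, List.length_append, List.length_singleton]
  constructor
  · rintro ⟨hlen, hget⟩
    have hpk : p.length < k := by omega
    refine ⟨⟨by omega, fun i hi hik => ?_⟩, hpk, ?_⟩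
    · have h1 := hget i (by omega) hik
      rw [h1]
      simp only [List.get_eq_getElem]
      exact List.getElem_append_left hi
    · have h1 := hget p.length (by omega) hpk
      rw [h1]
      simp only [List.get_eq_getElem]
      exact List.getElem_concat_length (l := p) (a := b) (i := p.length) rfl (by simp)
  · rintro ⟨⟨hlen, hget⟩, hpk, hb⟩
    refine ⟨by omega, fun i hi hik => ?_⟩
    rcases lt_or_eq_of_le (Nat.lt_succ_iff.1 hi) with h | h
    · rw [hget i h hik]
      simp only [List.get_eq_getElem]
      exact (List.getElem_append_left h).symm
    · subst h
      rw [hb]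
      simp only [List.get_eq_getElem]
      exact (List.getElem_concat_length (l := p) (a := b) (i := p.length) rfl (by simp)).symm

lemma block_eq_block {S : Type} {π : Finset (Finset S)} (hπ : IsBlockPartition π)
    {B B' : Finset S} (hB : B ∈ π) (hB' : B' ∈ π) {s : S} (hs : s ∈ B) (hs' : s ∈ B') :
    B = B' := by
  by_contra hne
  exact (Finset.disjoint_left.1 (hπ.2.1 B hB B' hB' hne)) hs hs'

lemma mem_of_sameBlock {S : Type} {π : Finset (Finset S)} (hπ : IsBlockPartition π)
    {B : Finset S} (hB : B ∈ π) {s t : S} (hs : s ∈ B) (hst : inSameBlock π s t) : t ∈ B := by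
  obtain ⟨C, hC, hsC, htC⟩ := hst
  rwa [block_eq_block hπ hB hC hs hsC]

lemma sameBlock_self {S : Type} {π : Finset (Finset S)} (hπ : IsBlockPartition π) (s : S) :
    inSameBlock π s s := by
  obtain ⟨B, hB, hsB⟩ := hπ.2.2 s
  exact ⟨B, hB, hsB, hsB⟩

lemma bsStep_mem_prefixBlock {p : List Bool} {σ : Fin k → Bool} (j : Fin (k - 1))
    (hσ : σ ∈ prefixBlock k p) (hj : p.length ≤ j.val) :
    bsStep σ j ∈ prefixBlock k p := by
  unfold bsStep
  split
  · exact hσ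
  · rw [mem_prefixBlock_iff] at hσ ⊢
    refine ⟨hσ.1, fun i hi hik => ?_⟩
    have hij : i < j.val := lt_of_lt_of_le hi hj
    simpa [hij] using hσ.2 i hi hik

lemma bsStep_sameBlock {π : Finset (Finset (Fin k → Bool))} (hπ : IsBlockPartition π)
    {p : List Bool} (hp : prefixBlock k p ∈ π) {σ τ : Fin k → Bool}
    (hσ : σ ∈ prefixBlock k p) (hτ : τ ∈ prefixBlock k p)
    (hbit : ∀ h : p.length < k, σ ⟨p.length, h⟩ = τ ⟨p.length, h⟩)
    (j : Fin (k - 1)) : inSameBlock π (bsStep σ j) (bsStep τ j) := by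
  have hagree : ∀ i : Fin k, i.val ≤ p.length → σ i = τ i := by
    intro i hi
    rcases lt_or_eq_of_le hi with h | h
    · have h1 := (mem_prefixBlock_iff.1 hσ).2 i.val h i.isLt
      have h2 := (mem_prefixBlock_iff.1 hτ).2 i.val h i.isLt
      calc σ i = σ ⟨i.val, i.isLt⟩ := rfl
        _ = p.get ⟨i.val, h⟩ := h1
        _ = τ ⟨i.val, i.isLt⟩ := h2.symm
        _ = τ i := rfl
    · have hlt : p.length < k := h ▸ i.isLt
      have : i = ⟨p.length, hlt⟩ := Fin.ext h
      rw [this]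
      exact hbit hlt
  by_cases hcase : j.val + 1 ≤ p.length
  · have hj1 : σ ⟨j.val + 1, by have := j.isLt; omega⟩ = τ ⟨j.val + 1, by have := j.isLt; omega⟩ :=
      hagree _ hcase
    unfold bsStep
    rw [hj1]
    by_cases hb : τ ⟨j.val + 1, by have := j.isLt; omega⟩ = false
    · simp only [if_pos hb]
      exact ⟨prefixBlock k p, hp, hσ, hτ⟩
    · simp only [if_neg hb]
      have heq : (fun q : Fin k => if q.val < j.val then σ q else if q.val = j.val then !(σ q) else false)
          = fun q : Fin k => if q.val < j.val then τ q else if q.val = j.val then !(τ q) else false := by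
        funext q
        by_cases h1 : q.val < j.val
        · simp only [h1, if_pos]
          exact hagree q (by omega)
        · by_cases h2 : q.val = j.val
          · simp only [h1, h2, if_neg, if_pos, if_false]
            rw [hagree q (by omega)]
          · simp [h1, h2]
      rw [heq]
      exact sameBlock_self hπ _
  · have hj : p.length ≤ j.val := by omega
    exact ⟨prefixBlock k p, hp, bsStep_mem_prefixBlock j hσ hj, bsStep_mem_prefixBlock j hτ hj⟩

lemma no_splitWitness {π : Finset (Finset (Fin k → Bool))} (hπ : IsBlockPartition π)
    {p : List Bool} (hp : prefixBlock k p ∈ π) {σ τ : Fin k → Bool}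
    (hσ : σ ∈ prefixBlock k p) (hτ : τ ∈ prefixBlock k p)
    (hbit : ∀ h : p.length < k, σ ⟨p.length, h⟩ = τ ⟨p.length, h⟩) :
    ¬ SplitWitness (bisplitter k) π σ τ := by
  rintro ⟨a, s', hs', hall⟩
  have hs'' : s' = bsStep σ a := hs'
  exact hall (bsStep τ a) rfl (hs'' ▸ bsStep_sameBlock hπ hp hσ hτ hbit a)

lemma sameBlock_next {π π' : Finset (Finset (Fin k → Bool))} (hπ : IsBlockPartition π)
    (hvr : ValidRefinement (bisplitter k) π π')
    {p : List Bool} (hp : prefixBlock k p ∈ π) {σ τ : Fin k → Bool}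
    (hσ : σ ∈ prefixBlock k p) (hτ : τ ∈ prefixBlock k p)
    (hbit : ∀ h : p.length < k, σ ⟨p.length, h⟩ = τ ⟨p.length, h⟩) :
    inSameBlock π' σ τ := by
  by_contra hns
  rcases hvr.2.2 σ τ hns with h | h | h
  · exact h ⟨_, hp, hσ, hτ⟩
  · exact no_splitWitness hπ hp hσ hτ hbit h
  · exact no_splitWitness hπ hp hτ hσ (fun h => (hbit h).symm) h

/-- The extension of `p` by bit `b` followed by zeros. -/
def extState (k : ℕ) (p : List Bool) (b : Bool) : Fin k → Bool :=
  fun i => if h : i.val < p.length then p.get ⟨i.val, h⟩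
    else if i.val = p.length then b else false

lemma extState_mem {p : List Bool} (hlen : p.length ≤ k) (b : Bool) :
    extState k p b ∈ prefixBlock k p := by
  rw [mem_prefixBlock_iff]
  exact ⟨hlen, fun i hi hik => by simp [extState, hi]⟩

lemma extState_bit {p : List Bool} (h : p.length < k) (b : Bool) :
    extState k p b ⟨p.length, h⟩ = b := by
  simp [extState]

end Stmt2Aux

/-- In a valid refinement sequence for the bisplitter `B_k` (k ≥ 1), a prefix
block `B_σ` of `π_i` either survives in `π_{i+1}` or is split into `B_{σ0}` and `B_{σ1}`. -/
theorem prefix_block_survives_or_splits_in_two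
    (k : ℕ) (hk : 1 ≤ k) (n : ℕ) (seq : ℕ → Finset (Finset (Fin k → Bool)))
    (hseq : ValidRefinementSeq (bisplitter k) n seq) :
    ∀ i < n, ∀ p : List Bool, prefixBlock k p ∈ seq i →
      prefixBlock k p ∈ seq (i + 1) ∨
      (prefixBlock k (p ++ [false]) ∈ seq (i + 1) ∧
        prefixBlock k (p ++ [true]) ∈ seq (i + 1)) := by
  intro i hi p hp
  have hπ : IsBlockPartition (seq i) := hseq.2.1 i (le_of_lt hi)
  have hπ' : IsBlockPartition (seq (i + 1)) := hseq.2.1 (i + 1) (by omega)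
  have hvr : ValidRefinement (bisplitter k) (seq i) (seq (i + 1)) := hseq.2.2.1 i hi
  have hne : (prefixBlock k p).Nonempty :=
    Finset.nonempty_iff_ne_empty.2 (fun h => hπ.1 (h ▸ hp))
  obtain ⟨σ₀, hσ₀⟩ := hne
  have hlen : p.length ≤ k := prefixBlock_length_le hσ₀
  have subPrefix : ∀ B ∈ seq (i + 1), ∀ s ∈ B, s ∈ prefixBlock k p → B ⊆ prefixBlock k p := by
    intro B hB s hsB hsp
    obtain ⟨C, hC, hsub⟩ := hvr.1 B hB
    have hCeq : C = prefixBlock k p := block_eq_block hπ hC hp (hsub hsB) hsp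
    exact hCeq ▸ hsub
  by_cases hmk : p.length < k
  · have hf : extState k p false ∈ prefixBlock k p := extState_mem hlen false
    have ht : extState k p true ∈ prefixBlock k p := extState_mem hlen true
    obtain ⟨B0, hB0, hfB0⟩ := hπ'.2.2 (extState k p false)
    obtain ⟨B1, hB1, htB1⟩ := hπ'.2.2 (extState k p true)
    have hB0sub : B0 ⊆ prefixBlock k p := subPrefix B0 hB0 _ hfB0 hf
    have hB1sub : B1 ⊆ prefixBlock k p := subPrefix B1 hB1 _ htB1 ht
    have h0sub : prefixBlock k (p ++ [false]) ⊆ B0 := by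
      intro τ hτ
      rw [mem_prefixBlock_append] at hτ
      obtain ⟨hτp, h', hb⟩ := hτ
      refine mem_of_sameBlock hπ' hB0 hfB0
        (sameBlock_next hπ hvr hp hf hτp fun h => ?_)
      rw [extState_bit h false]
      exact hb.symm
    have h1sub : prefixBlock k (p ++ [true]) ⊆ B1 := by
      intro τ hτ
      rw [mem_prefixBlock_append] at hτ
      obtain ⟨hτp, h', hb⟩ := hτ
      refine mem_of_sameBlock hπ' hB1 htB1
        (sameBlock_next hπ hvr hp ht hτp fun h => ?_)
      rw [extState_bit h true]
      exact hb.symm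
    by_cases hBB : B0 = B1
    · left
      have hB0eq : B0 = prefixBlock k p := by
        refine Finset.Subset.antisymm hB0sub fun τ hτ => ?_
        cases hbv : τ ⟨p.length, hmk⟩ with
        | false => exact h0sub (mem_prefixBlock_append.2 ⟨hτ, hmk, hbv⟩)
        | true =>
          rw [hBB]
          exact h1sub (mem_prefixBlock_append.2 ⟨hτ, hmk, hbv⟩)
      exact hB0eq ▸ hB0
    · right
      constructor
      · have hB0eq : B0 = prefixBlock k (p ++ [false]) := by
          refine Finset.Subset.antisymm (fun τ hτB => ?_) h0sub
          have hτp : τ ∈ prefixBlock k p := hB0sub hτB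
          rw [mem_prefixBlock_append]
          refine ⟨hτp, hmk, ?_⟩
          cases hbv : τ ⟨p.length, hmk⟩ with
          | false => rfl
          | true =>
            exact absurd (block_eq_block hπ' hB0 hB1 hτB
              (h1sub (mem_prefixBlock_append.2 ⟨hτp, hmk, hbv⟩))) hBB
        exact hB0eq ▸ hB0
      · have hB1eq : B1 = prefixBlock k (p ++ [true]) := by
          refine Finset.Subset.antisymm (fun τ hτB => ?_) h1sub
          have hτp : τ ∈ prefixBlock k p := hB1sub hτB
          rw [mem_prefixBlock_append]
          refine ⟨hτp, hmk, ?_⟩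
          cases hbv : τ ⟨p.length, hmk⟩ with
          | true => rfl
          | false =>
            exact absurd (block_eq_block hπ' hB1 hB0 hτB
              (h0sub (mem_prefixBlock_append.2 ⟨hτp, hmk, hbv⟩))).symm hBB
        exact hB1eq ▸ hB1
  · left
    have hmeq : p.length = k := le_antisymm hlen (not_lt.1 hmk)
    have hall : ∀ τ ∈ prefixBlock k p, τ = σ₀ := by
      intro τ hτ
      funext q
      show τ ⟨q.val, q.isLt⟩ = σ₀ ⟨q.val, q.isLt⟩
      rw [(mem_prefixBlock_iff.1 hτ).2 q.val (by omega) q.isLt,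
        (mem_prefixBlock_iff.1 hσ₀).2 q.val (by omega) q.isLt]
    obtain ⟨B0, hB0, hσB0⟩ := hπ'.2.2 σ₀
    have hB0sub : B0 ⊆ prefixBlock k p := subPrefix B0 hB0 _ hσB0 hσ₀
    have hB0eq : B0 = prefixBlock k p :=
      Finset.Subset.antisymm hB0sub fun τ hτ => (hall τ hτ) ▸ hσB0
    exact hB0eq ▸ hB0
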